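/- Let X, Y be Banach spaces and T : X → Y a bounded linear operator. If c ≥ 0 satisfies ‖(T y_k)|S_n‖ ≤ c ‖(y_k)|C_n‖ for all y_1,...,y_n ∈ X, then ‖(T x_k)|C_n‖ ≤ 9c ‖(x_k)|S_n‖ for all x_1,...,x_n ∈ X. In ideal-norm notation: ϱ(C_n, S_n) ≤ 9 ϱ(S_n, C_n) uniformly in n. -/

import Mathlib

/-!
Write `f t = ∑ cos (k t) • T x_k` and `g t = ∑ sin (k t) • x_k`; both norms are even and
`2π`-periodic, so all `L²` norms may be taken over a full period. The addition formulas give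
`f (t + θ) - f (t - θ) = -2 ∑ sin (k θ) sin (k t) • T x_k` and
`g (t + θ) - g (t - θ) = 2 ∑ sin (k θ) cos (k t) • x_k`, so the hypothesis applied to
`y_k = sin (k θ) • x_k` bounds `‖f - f (· + 2θ)‖` by `c ‖g (· + θ) - g (· - θ)‖ ≤ 2c ‖g‖`.
The `n + 1` translates of `f` by multiples of `2π / (n + 1)` sum to zero, so `f` is the
average of such differences and `‖f‖ ≤ 2c ‖g‖`.
-/

open Real Finset intervalIntegral Function

section Periodic

variable {E : Type*} [NormedAddCommGroup E] {p : ℝ}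

theorem Function.Periodic.intervalIntegral_comp_add_right [NormedSpace ℝ E] {φ : ℝ → E}
    (hφ : Periodic φ p) (a : ℝ) : ∫ t in (0 : ℝ)..p, φ (t + a) = ∫ t in (0 : ℝ)..p, φ t := by
  rw [integral_comp_add_right, zero_add, add_comm p, hφ.intervalIntegral_add_eq a 0, zero_add]

theorem Function.Periodic.intervalIntegral_two_mul_eq_of_even {φ : ℝ → ℝ} (hφ : Continuous φ)
    (hper : Periodic φ (2 * p)) (heven : ∀ t, φ (-t) = φ t) :
    ∫ t in (0 : ℝ)..2 * p, φ t = 2 * ∫ t in (0 : ℝ)..p, φ t := by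
  have hcentre : ∫ t in (0 : ℝ)..2 * p, φ t = ∫ t in -p..p, φ t := by
    simpa [two_mul] using hper.intervalIntegral_add_eq 0 (-p)
  have hleft : ∫ t in -p..0, φ t = ∫ t in (0 : ℝ)..p, φ t := by
    simpa [heven] using (integral_comp_neg (a := 0) (b := p) φ).symm
  rw [hcentre, ← integral_add_adjacent_intervals (b := 0) (hφ.intervalIntegrable _ _)
    (hφ.intervalIntegrable _ _), hleft, two_mul]

theorem Function.Periodic.intervalIntegral_norm_sub_sq_le {w : ℝ → E} (hper : Periodic w p)
    (hw : Continuous w) (hp : 0 ≤ p) (a b : ℝ) :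
    ∫ t in (0 : ℝ)..p, ‖w (t + a) - w (t + b)‖ ^ 2 ≤ 4 * ∫ t in (0 : ℝ)..p, ‖w t‖ ^ 2 := by
  have hnorm : Periodic (fun t => ‖w t‖ ^ 2) p := fun t => by simp only [hper t]
  calc ∫ t in (0 : ℝ)..p, ‖w (t + a) - w (t + b)‖ ^ 2
      ≤ ∫ t in (0 : ℝ)..p, (2 * ‖w (t + a)‖ ^ 2 + 2 * ‖w (t + b)‖ ^ 2) := by
        refine integral_mono_on hp (Continuous.intervalIntegrable (by fun_prop) _ _)
          (Continuous.intervalIntegrable (by fun_prop) _ _) fun t _ => ?_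
        nlinarith [norm_sub_le (w (t + a)) (w (t + b)), norm_nonneg (w (t + a) - w (t + b)),
          sq_nonneg (‖w (t + a)‖ - ‖w (t + b)‖)]
    _ = 4 * ∫ t in (0 : ℝ)..p, ‖w t‖ ^ 2 := by
        rw [integral_add (Continuous.intervalIntegrable (by fun_prop) _ _)
          (Continuous.intervalIntegrable (by fun_prop) _ _), integral_const_mul, integral_const_mul,
          hnorm.intervalIntegral_comp_add_right a, hnorm.intervalIntegral_comp_add_right b]
        ring

end Periodic

section Averaging

variable {E : Type*} [NormedAddCommGroup E]

theorem norm_sum_sq_le_card_mul_sum_norm_sq {ι : Type*} (s : Finset ι) (u : ι → E) :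
    ‖∑ i ∈ s, u i‖ ^ 2 ≤ #s * ∑ i ∈ s, ‖u i‖ ^ 2 :=
  (pow_le_pow_left₀ (norm_nonneg _) (norm_sum_le _ _) 2).trans (sq_sum_le_card_mul_sum_sq ..)

theorem intervalIntegral_norm_sq_le_of_sum_translates_eq_zero [NormedSpace ℝ E] {w : ℝ → E}
    (hw : Continuous w) {a b B : ℝ} (hab : a ≤ b) {M : ℕ} (hM : 0 < M) (s : ℕ → ℝ)
    (hsum : ∀ t, ∑ j ∈ range M, w (t + s j) = 0)
    (hB : ∀ j, ∫ t in a..b, ‖w t - w (t + s j)‖ ^ 2 ≤ B) :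
    ∫ t in a..b, ‖w t‖ ^ 2 ≤ B := by
  have hMpos : (0 : ℝ) < M := by exact_mod_cast hM
  have hpoint : ∀ t, M * ‖w t‖ ^ 2 ≤ ∑ j ∈ range M, ‖w t - w (t + s j)‖ ^ 2 := fun t => by
    have hdiff : ∑ j ∈ range M, (w t - w (t + s j)) = (M : ℝ) • w t := by
      rw [sum_sub_distrib, hsum, sub_zero, sum_const, card_range, Nat.cast_smul_eq_nsmul]
    have := norm_sum_sq_le_card_mul_sum_norm_sq (range M) fun j => w t - w (t + s j)
    rw [hdiff, card_range, norm_smul, norm_of_nonneg hMpos.le] at this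
    nlinarith
  have hint : M * ∫ t in a..b, ‖w t‖ ^ 2 ≤ M * B := calc
    M * ∫ t in a..b, ‖w t‖ ^ 2 ≤ ∫ t in a..b, ∑ j ∈ range M, ‖w t - w (t + s j)‖ ^ 2 := by
        rw [← integral_const_mul]
        exact integral_mono_on hab (Continuous.intervalIntegrable (by fun_prop) _ _)
          (Continuous.intervalIntegrable (by fun_prop) _ _) fun t _ => hpoint t
    _ = ∑ j ∈ range M, ∫ t in a..b, ‖w t - w (t + s j)‖ ^ 2 :=
        integral_finsetSum fun j _ => Continuous.intervalIntegrable (by fun_prop) _ _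
    _ ≤ M * B := by
        simpa using sum_le_sum fun j (_ : j ∈ range M) => hB j
  exact le_of_mul_le_mul_left hint hMpos

end Averaging

theorem sum_range_cos_mul_add_eq_zero {M k : ℕ} (hk : k ≠ 0) (hkM : k < M) (t : ℝ) :
    ∑ j ∈ range M, cos (k * (t + j * (2 * π / M))) = 0 := by
  have hζ := Complex.isPrimitiveRoot_exp M (by omega)
  set ζ := Complex.exp (2 * π * Complex.I / M)
  have hterm : ∀ j : ℕ, Complex.exp ((k * (t + j * (2 * π / M)) : ℝ) * Complex.I)
      = Complex.exp ((k * t : ℝ) * Complex.I) * (ζ ^ k) ^ j := fun j => by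
    rw [← pow_mul, ← Complex.exp_nat_mul, ← Complex.exp_add]
    push_cast
    ring_nf
  have hgeom : ∑ j ∈ range M, (ζ ^ k) ^ j = 0 := by
    rw [geom_sum_eq (hζ.pow_ne_one_of_pos_of_lt hk hkM), ← pow_mul, mul_comm, pow_mul,
      hζ.pow_eq_one, one_pow, sub_self, zero_div]
  simp_rw [← Complex.exp_ofReal_mul_I_re, ← Complex.re_sum, hterm, ← mul_sum, hgeom, mul_zero,
    Complex.zero_re]

section TrigPoly

variable {E : Type*} [NormedAddCommGroup E] [NormedSpace ℝ E] (n : ℕ) (v : ℕ → E)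

noncomputable def cosPoly (t : ℝ) : E := ∑ k ∈ Icc 1 n, cos (k * t) • v k

noncomputable def sinPoly (t : ℝ) : E := ∑ k ∈ Icc 1 n, sin (k * t) • v k

@[fun_prop]
theorem continuous_cosPoly : Continuous (cosPoly n v) := by
  unfold cosPoly; fun_prop

@[fun_prop]
theorem continuous_sinPoly : Continuous (sinPoly n v) := by
  unfold sinPoly; fun_prop

theorem periodic_cosPoly : Periodic (cosPoly n v) (2 * π) := fun t => by
  simp only [cosPoly, mul_add, cos_add_nat_mul_two_pi]

theorem periodic_sinPoly : Periodic (sinPoly n v) (2 * π) := fun t => by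
  simp only [sinPoly, mul_add, sin_add_nat_mul_two_pi]

theorem cosPoly_neg (t : ℝ) : cosPoly n v (-t) = cosPoly n v t := by
  simp only [cosPoly, mul_neg, cos_neg]

theorem sinPoly_neg (t : ℝ) : sinPoly n v (-t) = -sinPoly n v t := by
  simp only [sinPoly, mul_neg, sin_neg, neg_smul, sum_neg_distrib]

theorem cosPoly_add_sub_cosPoly_sub (t θ : ℝ) :
    cosPoly n v (t + θ) - cosPoly n v (t - θ) =
      (-2 : ℝ) • sinPoly n (fun k => sin (k * θ) • v k) t := by
  simp only [cosPoly, sinPoly, smul_sum, ← sum_sub_distrib, smul_smul, ← sub_smul]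
  refine sum_congr rfl fun k _ => ?_
  rw [mul_add, mul_sub, cos_add, cos_sub]
  ring_nf

theorem sinPoly_add_sub_sinPoly_sub (t θ : ℝ) :
    sinPoly n v (t + θ) - sinPoly n v (t - θ) =
      (2 : ℝ) • cosPoly n (fun k => sin (k * θ) • v k) t := by
  simp only [cosPoly, sinPoly, smul_sum, ← sum_sub_distrib, smul_smul, ← sub_smul]
  refine sum_congr rfl fun k _ => ?_
  rw [mul_add, mul_sub, sin_add, sin_sub]
  ring_nf

theorem sum_range_cosPoly_add_eq_zero (t : ℝ) :
    ∑ j ∈ range (n + 1), cosPoly n v (t + j * (2 * π / (n + 1 : ℕ))) = 0 := by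
  simp only [cosPoly]
  rw [sum_comm]
  refine sum_eq_zero fun k hk => ?_
  obtain ⟨hk1, hkn⟩ := mem_Icc.mp hk
  rw [← sum_smul, sum_range_cos_mul_add_eq_zero (by omega) (by omega), zero_smul]

theorem intervalIntegral_norm_cosPoly_sq_zero_two_pi :
    ∫ t in (0 : ℝ)..2 * π, ‖cosPoly n v t‖ ^ 2 = 2 * ∫ t in (0 : ℝ)..π, ‖cosPoly n v t‖ ^ 2 :=
  Periodic.intervalIntegral_two_mul_eq_of_even (by fun_prop)
    (fun t => by simp only [periodic_cosPoly n v t]) fun t => by simp only [cosPoly_neg]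

theorem intervalIntegral_norm_sinPoly_sq_zero_two_pi :
    ∫ t in (0 : ℝ)..2 * π, ‖sinPoly n v t‖ ^ 2 = 2 * ∫ t in (0 : ℝ)..π, ‖sinPoly n v t‖ ^ 2 :=
  Periodic.intervalIntegral_two_mul_eq_of_even (by fun_prop)
    (fun t => by simp only [periodic_sinPoly n v t]) fun t => by simp only [sinPoly_neg, norm_neg]

end TrigPoly

theorem sqrt_mul_le_mul_sqrt_iff {κ a b c : ℝ} (hκ : 0 < κ) (hb : 0 ≤ b) (hc : 0 ≤ c) :
    √(κ * a) ≤ c * √(κ * b) ↔ a ≤ c ^ 2 * b := by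
  have hsqrt : c * √(κ * b) = √(c ^ 2 * (κ * b)) := by rw [sqrt_mul (sq_nonneg c), sqrt_sq hc]
  rw [hsqrt, sqrt_le_sqrt_iff (by positivity), mul_left_comm, mul_le_mul_iff_right₀ hκ]

section Operator

variable {X Y : Type*} [NormedAddCommGroup X] [NormedSpace ℝ X] [NormedAddCommGroup Y]
  [NormedSpace ℝ Y]

theorem intervalIntegral_norm_cosPoly_sub_sq_le (T : X →L[ℝ] Y) {n : ℕ} {c : ℝ}
    (hT : ∀ y : ℕ → X, ∫ t in (0 : ℝ)..2 * π, ‖sinPoly n (fun k => T (y k)) t‖ ^ 2 ≤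
      c ^ 2 * ∫ t in (0 : ℝ)..2 * π, ‖cosPoly n y t‖ ^ 2)
    (x : ℕ → X) (s : ℝ) :
    ∫ t in (0 : ℝ)..2 * π,
        ‖cosPoly n (fun k => T (x k)) t - cosPoly n (fun k => T (x k)) (t + s)‖ ^ 2 ≤
      4 * c ^ 2 * ∫ t in (0 : ℝ)..2 * π, ‖sinPoly n x t‖ ^ 2 := by
  set f := cosPoly n fun k => T (x k)
  set θ := s / 2
  set y : ℕ → X := fun k => sin (k * θ) • x k
  have hf : ∀ t, f (t + θ) - f (t - θ) = (-2 : ℝ) • sinPoly n (fun k => T (y k)) t := fun t => by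
    simp only [f, y, map_smul, cosPoly_add_sub_cosPoly_sub]
  have hg : ∀ t, sinPoly n x (t + θ) - sinPoly n x (t - θ) = (2 : ℝ) • cosPoly n y t :=
    fun t => sinPoly_add_sub_sinPoly_sub n x t θ
  have hper : Periodic (fun t => ‖f t - f (t + s)‖ ^ 2) (2 * π) := fun t => by
    simp only [add_right_comm t, periodic_cosPoly n _ _, f]
  calc ∫ t in (0 : ℝ)..2 * π, ‖f t - f (t + s)‖ ^ 2
      = ∫ t in (0 : ℝ)..2 * π, ‖f (t + θ) - f (t - θ)‖ ^ 2 := by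
        rw [← hper.intervalIntegral_comp_add_right (-θ)]
        congr 1 with t
        rw [norm_sub_rev, show t + -θ + s = t + θ by ring, ← sub_eq_add_neg]
    _ = 4 * ∫ t in (0 : ℝ)..2 * π, ‖sinPoly n (fun k => T (y k)) t‖ ^ 2 := by
        simp only [hf, norm_smul, mul_pow, integral_const_mul]
        norm_num
    _ ≤ 4 * (c ^ 2 * ∫ t in (0 : ℝ)..2 * π, ‖cosPoly n y t‖ ^ 2) := by gcongr; exact hT y
    _ = c ^ 2 * ∫ t in (0 : ℝ)..2 * π, ‖sinPoly n x (t + θ) - sinPoly n x (t + -θ)‖ ^ 2 := by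
        simp only [← sub_eq_add_neg, hg, norm_smul, mul_pow, integral_const_mul]
        norm_num
        ring
    _ ≤ c ^ 2 * (4 * ∫ t in (0 : ℝ)..2 * π, ‖sinPoly n x t‖ ^ 2) := by
        gcongr
        exact (periodic_sinPoly n x).intervalIntegral_norm_sub_sq_le (by fun_prop)
          (by positivity) _ _
    _ = 4 * c ^ 2 * ∫ t in (0 : ℝ)..2 * π, ‖sinPoly n x t‖ ^ 2 := by ring

end Operator

/-- Proposition: `ϱ(𝒞_n,𝒮_n) ≤ 9 ϱ(𝒮_n,𝒞_n)`, in the form: any admissible constant `c`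
for `ϱ(T|𝒮_n,𝒞_n)` makes `9c` admissible for `ϱ(T|𝒞_n,𝒮_n)`. -/
theorem stmt10 {X Y : Type*} [NormedAddCommGroup X] [NormedSpace ℝ X]
    [NormedAddCommGroup Y] [NormedSpace ℝ Y]
    (T : X →L[ℝ] Y) {n : ℕ} (c : ℝ) (hc : 0 ≤ c)
    (h : ∀ y : ℕ → X,
      Real.sqrt ((2 / π) * ∫ t in (0 : ℝ)..π,
          ‖∑ k ∈ Finset.Icc 1 n, Real.sin (k * t) • T (y k)‖ ^ 2) ≤
        c * Real.sqrt ((2 / π) * ∫ t in (0 : ℝ)..π,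
          ‖∑ k ∈ Finset.Icc 1 n, Real.cos (k * t) • y k‖ ^ 2))
    (x : ℕ → X) :
    Real.sqrt ((2 / π) * ∫ t in (0 : ℝ)..π,
        ‖∑ k ∈ Finset.Icc 1 n, Real.cos (k * t) • T (x k)‖ ^ 2) ≤
      9 * c * Real.sqrt ((2 / π) * ∫ t in (0 : ℝ)..π,
        ‖∑ k ∈ Finset.Icc 1 n, Real.sin (k * t) • x k‖ ^ 2) := by
  have hκ : (0 : ℝ) < 2 / π := by positivity
  have hnonneg : ∀ w : ℝ → X, 0 ≤ ∫ t in (0 : ℝ)..π, ‖w t‖ ^ 2 := fun w =>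
    integral_nonneg pi_pos.le fun t _ => by positivity
  have hT : ∀ y : ℕ → X, ∫ t in (0 : ℝ)..2 * π, ‖sinPoly n (fun k => T (y k)) t‖ ^ 2 ≤
      c ^ 2 * ∫ t in (0 : ℝ)..2 * π, ‖cosPoly n y t‖ ^ 2 := fun y => by
    rw [intervalIntegral_norm_sinPoly_sq_zero_two_pi, intervalIntegral_norm_cosPoly_sq_zero_two_pi,
      mul_left_comm]
    gcongr
    exact (sqrt_mul_le_mul_sqrt_iff hκ (hnonneg _) hc).1 (h y)
  have hkey := intervalIntegral_norm_sq_le_of_sum_translates_eq_zero (continuous_cosPoly n _)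
    (by positivity) n.succ_pos _ (sum_range_cosPoly_add_eq_zero n _)
    fun j => intervalIntegral_norm_cosPoly_sub_sq_le T hT x _
  rw [intervalIntegral_norm_cosPoly_sq_zero_two_pi,
    intervalIntegral_norm_sinPoly_sq_zero_two_pi] at hkey
  calc √(2 / π * ∫ t in (0 : ℝ)..π, ‖cosPoly n (fun k => T (x k)) t‖ ^ 2)
      ≤ 2 * c * √(2 / π * ∫ t in (0 : ℝ)..π, ‖sinPoly n x t‖ ^ 2) :=
        (sqrt_mul_le_mul_sqrt_iff hκ (hnonneg _) (by positivity)).2 (by linarith)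
    _ ≤ 9 * c * √(2 / π * ∫ t in (0 : ℝ)..π, ‖sinPoly n x t‖ ^ 2) := by gcongr; norm_num
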